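/- arXiv:2205.04211 — 2 statements merged into one kernel-verified Lean document; each statement's English description precedes it below -/
import Mathlib

section
/- Let (K, ≤) be an ordered field and f = Σᵢ pᵢ² a sum of squares in K[X₁,...,Xₙ]. Then N(f) = 2·conv(N(p₁) ∪ ... ∪ N(p_ℓ)), and every vertex coefficient of f is positive. In particular, for each i, N(pᵢ) ⊆ ½·N(f). -/
/-!
Every exponent of `pᵢ²` is a sum of two exponents of `pᵢ`, so `N(f) ⊆ 2P` with
`P = conv ⋃ N(pᵢ)`. Conversely, a vertex `2β` of `2P` has `β + β` as its only decomposition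
into two points of `P`, so the coefficient of `X^{2β}` in `f` is `Σ coeff_β(pᵢ)²`, which is
positive because `β` is an exponent of some `pⱼ`. Hence the vertices of `2P` lie in `N(f)`,
and `2P ⊆ N(f)` by Krein–Milman.
-/

open Pointwise

/-- The Newton polytope of a multivariate polynomial: the convex hull in `ℝⁿ` of
the exponent vectors of its nonzero terms. -/
noncomputable def newtonPolytope {K : Type*} [CommSemiring K] {n : ℕ}
    (f : MvPolynomial (Fin n) K) : Set (Fin n → ℝ) :=
  convexHull ℝ ((fun α : Fin n →₀ ℕ => fun i => (α i : ℝ)) ''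
    (f.support : Set (Fin n →₀ ℕ)))

open Set MvPolynomial

lemma convexHull_iUnion_convexHull {𝕜 E : Type*} {ι : Sort*} [Semiring 𝕜] [PartialOrder 𝕜]
    [AddCommMonoid E] [Module 𝕜 E] (s : ι → Set E) :
    convexHull 𝕜 (⋃ i, convexHull 𝕜 (s i)) = convexHull 𝕜 (⋃ i, s i) :=
  (convexHull_min (iUnion_subset fun i => convexHull_mono (subset_iUnion s i))
    (convex_convexHull 𝕜 _)).antisymm
    (convexHull_mono (iUnion_mono fun i => subset_convexHull 𝕜 (s i)))

section Convex

variable {𝕜 E : Type*} [Field 𝕜] [LinearOrder 𝕜] [IsStrictOrderedRing 𝕜]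
  [AddCommGroup E] [Module 𝕜 E]

lemma Convex.two_smul_eq_add {A : Set E} (hA : Convex 𝕜 A) : (2 : 𝕜) • A = A + A := by
  rw [← one_add_one_eq_two, hA.add_smul zero_le_one zero_le_one, one_smul]

lemma extremePoints_smul_convexHull_subset (a : 𝕜) (s : Set E) :
    (a • convexHull 𝕜 s).extremePoints 𝕜 ⊆ a • s := by
  rw [← convexHull_smul]
  exact extremePoints_convexHull_subset

/-- `x + y` is the midpoint of `2 • x` and `2 • y`. -/
lemma eq_of_add_mem_extremePoints_two_smul {A : Set E} {x y : E} (hx : x ∈ A) (hy : y ∈ A)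
    (h : x + y ∈ ((2 : 𝕜) • A).extremePoints 𝕜) : x = y := by
  have hmid : x + y ∈ openSegment 𝕜 ((2 : 𝕜) • x) ((2 : 𝕜) • y) :=
    ⟨2⁻¹, 2⁻¹, by norm_num, by norm_num, by norm_num, by
      simp only [smul_smul, inv_mul_cancel₀ (two_ne_zero' 𝕜), one_smul]⟩
  have hxy := (mem_extremePoints.1 h).2 _ (smul_mem_smul_set hx) _ (smul_mem_smul_set hy) hmid
  exact (smul_right_inj (two_ne_zero' 𝕜)).1 (hxy.1.trans hxy.2.symm)

end Convex

section KreinMilman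

variable {E : Type*} [AddCommGroup E] [Module ℝ E] [TopologicalSpace E] [T2Space E]
  [IsTopologicalAddGroup E] [ContinuousSMul ℝ E] [LocallyConvexSpace ℝ E]

lemma Set.Finite.convexHull_extremePoints_convexHull {s : Set E} (hs : s.Finite) :
    convexHull ℝ ((convexHull ℝ s).extremePoints ℝ) = convexHull ℝ s := by
  have hclosed := (hs.subset (extremePoints_convexHull_subset (𝕜 := ℝ))).isClosed_convexHull ℝ
  rw [← hclosed.closure_eq]
  exact closure_convexHull_extremePoints (hs.isCompact_convexHull ℝ) (convex_convexHull ℝ s)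

lemma Set.Finite.convexHull_subset_of_extremePoints_subset {s t : Set E} (hs : s.Finite)
    (h : (convexHull ℝ s).extremePoints ℝ ⊆ convexHull ℝ t) :
    convexHull ℝ s ⊆ convexHull ℝ t := by
  rw [← hs.convexHull_extremePoints_convexHull]
  exact convexHull_min h (convex_convexHull ℝ t)

end KreinMilman

section Exponents

variable {σ K ι : Type*}

noncomputable def expVec (α : σ →₀ ℕ) : σ → ℝ := fun i => α i

lemma expVec_injective : Function.Injective (expVec (σ := σ)) :=
  fun _ _ h => Finsupp.ext fun i => Nat.cast_injective (R := ℝ) (congrFun h i)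

lemma expVec_add (α β : σ →₀ ℕ) : expVec (α + β) = expVec α + expVec β := by
  ext i
  simp [expVec]

lemma expVec_add_self (β : σ →₀ ℕ) : expVec (β + β) = (2 : ℝ) • expVec β := by
  rw [expVec_add, two_smul]

noncomputable def expSet [CommSemiring K] (f : MvPolynomial σ K) : Set (σ → ℝ) :=
  expVec '' f.support

lemma expSet_finite [CommSemiring K] (f : MvPolynomial σ K) : (expSet f).Finite :=
  f.support.finite_toSet.image _

lemma expSet_mul_subset [CommSemiring K] [DecidableEq σ] (p q : MvPolynomial σ K) :
    expSet (p * q) ⊆ expSet p + expSet q := by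
  rintro _ ⟨α, hα, rfl⟩
  obtain ⟨β, hβ, γ, hγ, rfl⟩ := Finset.mem_add.1 (support_mul p q hα)
  exact ⟨_, mem_image_of_mem _ hβ, _, mem_image_of_mem _ hγ, (expVec_add β γ).symm⟩

lemma expSet_sum_subset [CommSemiring K] [DecidableEq σ] [Fintype ι]
    (g : ι → MvPolynomial σ K) : expSet (∑ i, g i) ⊆ ⋃ i, expSet (g i) := by
  rintro _ ⟨α, hα, rfl⟩
  obtain ⟨i, -, hi⟩ := Finset.mem_biUnion.1 (support_sum hα)
  exact mem_iUnion.2 ⟨i, mem_image_of_mem _ hi⟩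

/-- Since `2β` is a vertex, `β + β` is its only decomposition into two exponents of `p`. -/
lemma coeff_sq_of_mem_extremePoints [CommSemiring K] [DecidableEq σ] {p : MvPolynomial σ K}
    {A : Set (σ → ℝ)} (hA : expSet p ⊆ A) {β : σ →₀ ℕ}
    (hβ : expVec (β + β) ∈ ((2 : ℝ) • A).extremePoints ℝ) :
    (p ^ 2).coeff (β + β) = p.coeff β ^ 2 := by
  rw [sq, coeff_mul, sq]
  refine Finset.sum_eq_single (β, β) ?_
    fun h => (h (Finset.HasAntidiagonal.mem_antidiagonal.2 rfl)).elim
  rintro ⟨x, y⟩ hxy hne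
  rw [Finset.HasAntidiagonal.mem_antidiagonal] at hxy
  by_contra hz
  have hx : expVec x ∈ A := hA (mem_image_of_mem _ (mem_support_iff.2 (left_ne_zero_of_mul hz)))
  have hy : expVec y ∈ A := hA (mem_image_of_mem _ (mem_support_iff.2 (right_ne_zero_of_mul hz)))
  have hxy' : x = y := expVec_injective <|
    eq_of_add_mem_extremePoints_two_smul hx hy (by rwa [← expVec_add, hxy])
  subst hxy'
  have hxβ : x = β := expVec_injective <| (smul_right_inj (two_ne_zero' ℝ)).1 <| by
    simp only [← expVec_add_self, hxy]
  exact hne (by rw [hxβ])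

end Exponents

section NewtonPolytope

variable {K ι : Type*} [CommSemiring K] [Fintype ι] {n : ℕ}

lemma newtonPolytope_eq_convexHull_expSet (f : MvPolynomial (Fin n) K) :
    newtonPolytope f = convexHull ℝ (expSet f) :=
  rfl

lemma newtonPolytope_sq_subset (p : MvPolynomial (Fin n) K) :
    newtonPolytope (p ^ 2) ⊆ (2 : ℝ) • newtonPolytope p := by
  rw [newtonPolytope_eq_convexHull_expSet, newtonPolytope_eq_convexHull_expSet,
    (convex_convexHull ℝ _).two_smul_eq_add, ← convexHull_add, sq]
  exact convexHull_mono (expSet_mul_subset p p)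

lemma newtonPolytope_sum_subset (g : ι → MvPolynomial (Fin n) K) :
    newtonPolytope (∑ i, g i) ⊆ convexHull ℝ (⋃ i, newtonPolytope (g i)) := by
  simp only [newtonPolytope_eq_convexHull_expSet]
  rw [convexHull_iUnion_convexHull]
  exact convexHull_mono (expSet_sum_subset g)

lemma newtonPolytope_sum_sq_subset (p : ι → MvPolynomial (Fin n) K) :
    newtonPolytope (∑ i, p i ^ 2) ⊆ (2 : ℝ) • convexHull ℝ (⋃ i, newtonPolytope (p i)) := by
  refine (newtonPolytope_sum_subset _).trans ?_
  rw [← convexHull_smul, smul_set_iUnion]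
  exact convexHull_mono (iUnion_mono fun i => newtonPolytope_sq_subset (p i))

end NewtonPolytope

section SumOfSquares

variable {σ K ι : Type*} [CommRing K] [LinearOrder K] [IsStrictOrderedRing K] [Fintype ι]

lemma coeff_sum_sq_pos_of_mem_extremePoints [DecidableEq σ] (p : ι → MvPolynomial σ K)
    {α : σ →₀ ℕ}
    (hα : expVec α ∈ ((2 : ℝ) • convexHull ℝ (⋃ i, expSet (p i))).extremePoints ℝ) :
    0 < (∑ i, p i ^ 2).coeff α := by
  obtain ⟨_, hv, hαv⟩ := extremePoints_smul_convexHull_subset _ _ hα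
  obtain ⟨j, β, hβ, rfl⟩ := mem_iUnion.1 hv
  obtain rfl : α = β + β := expVec_injective (hαv.symm.trans (expVec_add_self β).symm)
  have hcoeff (i : ι) : (p i ^ 2).coeff (β + β) = (p i).coeff β ^ 2 :=
    coeff_sq_of_mem_extremePoints
      ((subset_iUnion (fun i => expSet (p i)) i).trans (subset_convexHull ℝ _)) hα
  rw [coeff_sum, Finset.sum_congr rfl fun i _ => hcoeff i]
  exact Finset.sum_pos' (fun i _ => sq_nonneg _)
    ⟨j, Finset.mem_univ j, sq_pos_iff.2 (mem_support_iff.1 hβ)⟩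

variable {n : ℕ}

/-- By Krein–Milman it suffices to see the vertices of the left-hand side in `N(f)`, and these
are exponents of `f` because vertex coefficients are positive. -/
lemma two_smul_convexHull_subset_newtonPolytope_sum_sq (p : ι → MvPolynomial (Fin n) K) :
    (2 : ℝ) • convexHull ℝ (⋃ i, newtonPolytope (p i)) ⊆ newtonPolytope (∑ i, p i ^ 2) := by
  simp only [newtonPolytope_eq_convexHull_expSet]
  rw [convexHull_iUnion_convexHull, ← convexHull_smul]
  refine (finite_iUnion fun i => expSet_finite (p i)).smul_set
    |>.convexHull_subset_of_extremePoints_subset fun v hv => ?_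
  rw [convexHull_smul] at hv
  obtain ⟨_, hw, rfl⟩ := extremePoints_smul_convexHull_subset _ _ hv
  obtain ⟨j, β, -, rfl⟩ := mem_iUnion.1 hw
  simp only [← expVec_add_self] at hv ⊢
  exact subset_convexHull ℝ _
    ⟨_, mem_support_iff.2 (coeff_sum_sq_pos_of_mem_extremePoints p hv).ne', rfl⟩

lemma newtonPolytope_sum_sq (p : ι → MvPolynomial (Fin n) K) :
    newtonPolytope (∑ i, p i ^ 2) = (2 : ℝ) • convexHull ℝ (⋃ i, newtonPolytope (p i)) :=
  (newtonPolytope_sum_sq_subset p).antisymm (two_smul_convexHull_subset_newtonPolytope_sum_sq p)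

end SumOfSquares

/-- For a sum of squares `f = Σ pᵢ²` over an ordered field:
`N(f) = 2·conv(N(p₁) ∪ … ∪ N(p_ℓ))`, every vertex coefficient of `f` is positive,
and each `N(pᵢ) ⊆ ½·N(f)`. -/
theorem stmt17 {K : Type*} [Field K] [LinearOrder K] [IsStrictOrderedRing K] {n l : ℕ}
    (p : Fin l → MvPolynomial (Fin n) K) (f : MvPolynomial (Fin n) K)
    (hf : f = ∑ i, p i ^ 2) :
    newtonPolytope f = (2 : ℝ) • convexHull ℝ (⋃ i, newtonPolytope (p i)) ∧
      (∀ α : Fin n →₀ ℕ,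
        (fun i => (α i : ℝ)) ∈ Set.extremePoints ℝ (newtonPolytope f) →
          0 < f.coeff α) ∧
      ∀ i, newtonPolytope (p i) ⊆ (2⁻¹ : ℝ) • newtonPolytope f := by
  subst hf
  have hN := newtonPolytope_sum_sq p
  refine ⟨hN, fun α hα => coeff_sum_sq_pos_of_mem_extremePoints p ?_, fun i => ?_⟩
  · simp only [hN, newtonPolytope_eq_convexHull_expSet, convexHull_iUnion_convexHull] at hα
    exact hα
  · rw [hN, smul_smul, inv_mul_cancel₀ two_ne_zero, one_smul]
    exact (subset_iUnion (fun i => newtonPolytope (p i)) i).trans (subset_convexHull ℝ _)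
end

section
/- (Abstract Archimedean Positivstellensatz) Let A be a commutative ring, T ⊆ A an Archimedean preorder (for every a ∈ A there is N ∈ ℕ with N + a ∈ T), and a ∈ A with â > 0 on Sper(A,T), i.e., a ∈ P∖(-P) for every prime cone P of A containing T. Then there exists N ∈ ℕ such that N·a ∈ 1 + T. -/
/-- A preorder of a commutative ring `A`: contains all squares and is closed under
addition and multiplication. -/
def IsRingPreordering {A : Type*} [CommRing A] (T : Set A) : Prop :=
  (∀ a : A, a ^ 2 ∈ T) ∧ (∀ a ∈ T, ∀ b ∈ T, a + b ∈ T) ∧ (∀ a ∈ T, ∀ b ∈ T, a * b ∈ T)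

/-- A prime cone of a commutative ring `A`. -/
def IsPrimeCone {A : Type*} [CommRing A] (P : Set A) : Prop :=
  (∀ a ∈ P, ∀ b ∈ P, a + b ∈ P) ∧ (∀ a ∈ P, ∀ b ∈ P, a * b ∈ P) ∧
    (∀ a : A, a ∈ P ∨ -a ∈ P) ∧ (-1 : A) ∉ P ∧
    ∀ a b : A, a * b ∈ P → a ∈ P ∨ -b ∈ P


/-!
Two steps. First, if no `p, q ∈ T` satisfy `p * a = 1 + q`, then `T - a T` is a preordering
not containing `-1`; a maximal such preordering above it (Zorn) is a prime cone containing
`T` and `-a`. Second, writing `x ≤ y` for `y - x ∈ T`, choose naturals `k ≥ p` and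
`l ≥ ±a`. Iterating
`p * a = 1 + q` gives `k ^ (n + 1) * a ≥ k ^ n + (k - p) ^ (n + 1) * a`, and
`l * (k - p) ≤ k * l - 1` makes the error term negligible, because
`(k * l - 1) ^ (n + 1) + 1 ≤ (k * l) ^ n` for large `n`.
-/

open scoped Pointwise

theorem Nat.exists_pow_succ_add_one_le_pow (r : ℕ) :
    ∃ n : ℕ, r ^ (n + 1) + 1 ≤ (r + 1) ^ n := by
  have hr : (0 : ℝ) < r + 1 := by positivity
  obtain ⟨n, hn⟩ := exists_pow_lt_of_lt_one (one_div_pos.2 hr)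
    (show (r : ℝ) / (r + 1) < 1 by rw [div_lt_one hr]; linarith)
  rw [div_pow, div_lt_div_iff₀ (by positivity) hr, one_mul] at hn
  have : (r : ℝ) ^ (n + 1) < (r + 1) ^ n :=
    calc (r : ℝ) ^ (n + 1) ≤ r ^ n * (r + 1) := by rw [pow_succ]; gcongr; linarith
      _ < (r + 1) ^ n := hn
  exact ⟨n, Nat.succ_le_of_lt (by exact_mod_cast this)⟩

namespace IsRingPreordering

variable {A : Type*} [CommRing A] {T : Set A}

theorem add_mem (hT : IsRingPreordering T) {x y : A} (hx : x ∈ T) (hy : y ∈ T) : x + y ∈ T :=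
  hT.2.1 x hx y hy

theorem mul_mem (hT : IsRingPreordering T) {x y : A} (hx : x ∈ T) (hy : y ∈ T) : x * y ∈ T :=
  hT.2.2 x hx y hy

theorem zero_mem (hT : IsRingPreordering T) : (0 : A) ∈ T := by simpa using hT.1 0

theorem one_mem (hT : IsRingPreordering T) : (1 : A) ∈ T := by simpa using hT.1 1

theorem natCast_mem (hT : IsRingPreordering T) : ∀ n : ℕ, (n : A) ∈ T
  | 0 => by simpa using hT.zero_mem
  | n + 1 => by simpa using hT.add_mem (hT.natCast_mem n) hT.one_mem

theorem pow_mem (hT : IsRingPreordering T) {x : A} (hx : x ∈ T) : ∀ n : ℕ, x ^ n ∈ T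
  | 0 => by simpa using hT.one_mem
  | n + 1 => by simpa [pow_succ] using hT.mul_mem (hT.pow_mem hx n) hx

theorem natCast_sub_natCast_mem (hT : IsRingPreordering T) {m n : ℕ} (h : n ≤ m) :
    (m : A) - n ∈ T := by
  rw [← Nat.cast_sub h]
  exact hT.natCast_mem _

theorem pow_sub_pow_mem (hT : IsRingPreordering T) {x y : A} (hy : y ∈ T) (hxy : x - y ∈ T) :
    ∀ n : ℕ, x ^ n - y ^ n ∈ T
  | 0 => by simpa using hT.zero_mem
  | n + 1 => by
    have hx : x ∈ T := by simpa using hT.add_mem hxy hy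
    convert hT.add_mem (hT.mul_mem hx (hT.pow_sub_pow_mem hy hxy n))
      (hT.mul_mem hxy (hT.pow_mem hy n)) using 1
    ring

theorem exists_natCast_sub_mem_and_add_mem (hT : IsRingPreordering T)
    (harch : ∀ a : A, ∃ N : ℕ, (N : A) + a ∈ T) (a : A) :
    ∃ l : ℕ, 0 < l ∧ (l : A) - a ∈ T ∧ (l : A) + a ∈ T := by
  obtain ⟨l₁, h₁⟩ := harch (-a)
  obtain ⟨l₂, h₂⟩ := harch a
  refine ⟨l₁ + l₂ + 1, by omega, ?_, ?_⟩
  · convert hT.add_mem h₁ (hT.natCast_mem (l₂ + 1)) using 1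
    push_cast; ring
  · convert hT.add_mem h₂ (hT.natCast_mem (l₁ + 1)) using 1
    push_cast; ring

theorem add_smul_set (hT : IsRingPreordering T) (b : A) : IsRingPreordering (T + b • T) := by
  refine ⟨fun x => ⟨x ^ 2, hT.1 x, 0, ⟨0, hT.zero_mem, by simp⟩, by simp⟩, ?_, ?_⟩
  · rintro _ ⟨s, hs, _, ⟨t, ht, rfl⟩, rfl⟩ _ ⟨s', hs', _, ⟨t', ht', rfl⟩, rfl⟩
    refine ⟨s + s', hT.add_mem hs hs', _, ⟨t + t', hT.add_mem ht ht', rfl⟩, ?_⟩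
    simp only [smul_eq_mul]; ring
  · rintro _ ⟨s, hs, _, ⟨t, ht, rfl⟩, rfl⟩ _ ⟨s', hs', _, ⟨t', ht', rfl⟩, rfl⟩
    refine ⟨s * s' + b ^ 2 * (t * t'),
      hT.add_mem (hT.mul_mem hs hs') (hT.mul_mem (hT.1 b) (hT.mul_mem ht ht')),
      _, ⟨s * t' + s' * t, hT.add_mem (hT.mul_mem hs ht') (hT.mul_mem hs' ht), rfl⟩, ?_⟩
    simp only [smul_eq_mul]; ring

theorem subset_add_smul_set (hT : IsRingPreordering T) (b : A) : T ⊆ T + b • T :=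
  fun x hx => ⟨x, hx, 0, ⟨0, hT.zero_mem, by simp⟩, by simp⟩

theorem mem_add_smul_set_self (hT : IsRingPreordering T) (b : A) : b ∈ T + b • T :=
  ⟨0, hT.zero_mem, b, ⟨1, hT.one_mem, by simp⟩, by simp⟩

theorem neg_one_mem_of_mem_add_smul_set (hT : IsRingPreordering T) {b c : A}
    (hb : -1 ∈ T + b • T) (hc : -1 ∈ T + c • T) (hbc : -(b * c) ∈ T) :
    (-1 : A) ∈ T := by
  obtain ⟨s, hs, _, ⟨t, ht, rfl⟩, hst⟩ := hb
  obtain ⟨s', hs', _, ⟨t', ht', rfl⟩, hst'⟩ := hc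
  simp only [smul_eq_mul] at hst hst'
  have h : (-1 : A) = s + s' + s * s' + -(b * c) * (t * t') := by
    linear_combination (-1 - s') * hst + b * t * hst'
  rw [h]
  exact hT.add_mem (hT.add_mem (hT.add_mem hs hs') (hT.mul_mem hs hs'))
    (hT.mul_mem hbc (hT.mul_mem ht ht'))

theorem sUnion_of_isChain {C : Set (Set A)} (hC : ∀ P ∈ C, IsRingPreordering P)
    (hchain : IsChain (· ⊆ ·) C) (hne : C.Nonempty) : IsRingPreordering (⋃₀ C) := by
  have closed (f : A → A → A) (hf : ∀ P ∈ C, ∀ x ∈ P, ∀ y ∈ P, f x y ∈ P) :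
      ∀ x ∈ ⋃₀ C, ∀ y ∈ ⋃₀ C, f x y ∈ ⋃₀ C := by
    rintro x ⟨P, hP, hx⟩ y ⟨Q, hQ, hy⟩
    rcases hchain.total hP hQ with h | h
    · exact ⟨Q, hQ, hf Q hQ x (h hx) y hy⟩
    · exact ⟨P, hP, hf P hP x hx y (h hy)⟩
  obtain ⟨P₀, hP₀⟩ := hne
  exact ⟨fun x => ⟨P₀, hP₀, (hC P₀ hP₀).1 x⟩,
    closed (· + ·) fun P hP => (hC P hP).2.1,
    closed (· * ·) fun P hP => (hC P hP).2.2⟩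

theorem exists_isPrimeCone_superset (hT : IsRingPreordering T) (hT₁ : (-1 : A) ∉ T) :
    ∃ P : Set A, IsPrimeCone P ∧ T ⊆ P := by
  obtain ⟨P, hTP, hmax⟩ :=
    zorn_subset_nonempty {P : Set A | IsRingPreordering P ∧ (-1 : A) ∉ P}
      (fun C hC hchain hne => ⟨⋃₀ C, ⟨sUnion_of_isChain (fun P hP => (hC hP).1) hchain hne,
        fun ⟨P, hP, h⟩ => (hC hP).2 h⟩, fun _ => Set.subset_sUnion_of_mem⟩) T ⟨hT, hT₁⟩
  obtain ⟨hP, hP₁⟩ := hmax.prop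
  have neg_one_mem (b : A) (hb : b ∉ P) : (-1 : A) ∈ P + b • P := by
    by_contra h
    exact hb (hmax.2 ⟨hP.add_smul_set b, h⟩ (hP.subset_add_smul_set b)
      (hP.mem_add_smul_set_self b))
  refine ⟨P, ⟨hP.2.1, hP.2.2, fun b => ?_, hP₁, fun b c hbc => ?_⟩, hTP⟩
  · by_contra! h
    exact hP₁ (hP.neg_one_mem_of_mem_add_smul_set (neg_one_mem b h.1) (neg_one_mem (-b) h.2)
      (by simpa [← sq] using hP.1 b))
  · by_contra! h
    exact hP₁ (hP.neg_one_mem_of_mem_add_smul_set (neg_one_mem b h.1) (neg_one_mem (-c) h.2)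
      (by simpa using hbc))

theorem exists_mul_eq_one_add_of_neg_notMem (hT : IsRingPreordering T) {a : A}
    (hpos : ∀ P : Set A, IsPrimeCone P → T ⊆ P → -a ∉ P) :
    ∃ p ∈ T, ∃ q ∈ T, p * a = 1 + q := by
  by_contra! h
  have hT₁ : (-1 : A) ∉ T + (-a) • T := by
    rintro ⟨s, hs, _, ⟨t, ht, rfl⟩, hst⟩
    exact h t ht s hs (by simp only [smul_eq_mul] at hst; linear_combination -hst)
  obtain ⟨P, hP, hTP⟩ := (hT.add_smul_set (-a)).exists_isPrimeCone_superset hT₁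
  exact hpos P hP ((hT.subset_add_smul_set (-a)).trans hTP)
    (hTP (hT.mem_add_smul_set_self (-a)))

theorem pow_succ_mul_sub_mem (hT : IsRingPreordering T) {k p a : A} (hk : k ∈ T)
    (hkp : k - p ∈ T) (hpa : p * a - 1 ∈ T) :
    ∀ n : ℕ, k ^ (n + 1) * a - k ^ n - (k - p) ^ (n + 1) * a ∈ T
  | 0 => by convert hpa using 1; ring
  | n + 1 => by
    convert hT.add_mem (hT.mul_mem hk (hT.pow_succ_mul_sub_mem hk hkp hpa n))
      (hT.add_mem (hT.mul_mem (hT.pow_mem hkp (n + 1)) hpa) (hT.pow_mem hkp (n + 1))) using 1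
    ring

theorem exists_natCast_mul_eq_one_add_of_mul_eq (hT : IsRingPreordering T)
    (harch : ∀ a : A, ∃ N : ℕ, (N : A) + a ∈ T) {p q a : A} (hp : p ∈ T) (hq : q ∈ T)
    (hpq : p * a = 1 + q) : ∃ N : ℕ, 0 < N ∧ ∃ t ∈ T, (N : A) * a = 1 + t := by
  obtain ⟨k, hk, hkp, -⟩ := hT.exists_natCast_sub_mem_and_add_mem harch p
  obtain ⟨l, hl, hla, hal⟩ := hT.exists_natCast_sub_mem_and_add_mem harch a
  obtain ⟨r, hr⟩ : ∃ r : ℕ, k * l = r + 1 :=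
    ⟨k * l - 1, by have := Nat.mul_pos hk hl; omega⟩
  obtain ⟨n, hn⟩ := Nat.exists_pow_succ_add_one_le_pow r
  have hrA : (k : A) * l = r + 1 := by rw [← Nat.cast_mul, hr, Nat.cast_succ]
  have hlkp : (l : A) * (k - p) ∈ T := hT.mul_mem (hT.natCast_mem l) hkp
  have hmain : ((k : A) * l) ^ (n + 1) * a - l ^ (n + 1) * k ^ n
      - (l * (k - p)) ^ (n + 1) * a ∈ T := by
    convert hT.mul_mem (hT.pow_mem (hT.natCast_mem l) (n + 1))
      (hT.pow_succ_mul_sub_mem (hT.natCast_mem k) hkp (by rwa [hpq, add_sub_cancel_left]) n)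
      using 1
    rw [mul_pow, mul_pow]
    ring
  have hlkp_le : (r : A) - l * (k - p) ∈ T := by
    convert hT.add_mem (hT.mul_mem hla hp) hq using 1
    linear_combination hpq - hrA
  have hnat : l * r ^ (n + 1) + 1 ≤ l ^ (n + 1) * k ^ n := by
    calc l * r ^ (n + 1) + 1 ≤ l * (r ^ (n + 1) + 1) := by nlinarith
      _ ≤ l * (r + 1) ^ n := Nat.mul_le_mul_left l hn
      _ = l ^ (n + 1) * k ^ n := by rw [← hr]; ring
  refine ⟨(k * l) ^ (n + 1), by positivity, _, hT.add_mem (hT.add_mem (hT.add_mem hmain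
    (hT.mul_mem (hT.pow_mem hlkp (n + 1)) hal))
    (hT.mul_mem (hT.natCast_mem l) (hT.pow_sub_pow_mem hlkp hlkp_le (n + 1))))
    (hT.natCast_sub_natCast_mem hnat), ?_⟩
  push_cast
  ring

end IsRingPreordering

/-- Abstract Archimedean Positivstellensatz: if `T` is an Archimedean preorder of a
commutative ring `A` and `â > 0` on `Sper(A,T)`, then `N·a ∈ 1 + T` for some
positive integer `N`. -/
theorem stmt19 {A : Type*} [CommRing A] (T : Set A) (hT : IsRingPreordering T)
    (harch : ∀ a : A, ∃ N : ℕ, (N : A) + a ∈ T) (a : A)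
    (hpos : ∀ P : Set A, IsPrimeCone P → T ⊆ P → a ∈ P ∧ -a ∉ P) :
    ∃ N : ℕ, 0 < N ∧ ∃ t ∈ T, (N : A) * a = 1 + t := by
  obtain ⟨p, hp, q, hq, hpq⟩ :=
    hT.exists_mul_eq_one_add_of_neg_notMem fun P hP hTP => (hpos P hP hTP).2
  exact hT.exists_natCast_mul_eq_one_add_of_mul_eq harch hp hq hpq
end
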